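/- Let B ∈ ℂ^{m×n}, W ∈ ℂ^{n×m}, let k be a natural number with k = ind(WB), let H be the Moore–Penrose inverse of B, and let Z be a minimal rank W-weighted right weak Drazin inverse of B. Then Y₁ = W·Z·W·B·H is the unique matrix Y₁ ∈ ℂ^{n×m} such that Y₁·B is idempotent with col(Y₁·B) = col(W·Z) and N(Y₁·B) = N((W·B)^k), and col(Y₁^*) ⊆ col(B). -/

import Mathlib

open Matrix
open Module

/-- The index of a square complex matrix: the least `j` with `rank (M^j) = rank (M^(j+1))`. -/
noncomputable def matIndex {p : ℕ} (M : Matrix (Fin p) (Fin p) ℂ) : ℕ :=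
  sInf {j : ℕ | (M ^ j).rank = (M ^ (j + 1)).rank}

/-- The column space of a complex matrix: the range of `v ↦ M *ᵥ v`. -/
noncomputable def colSpace {a b : ℕ} (M : Matrix (Fin a) (Fin b) ℂ) :
    Submodule ℂ (Fin a → ℂ) :=
  LinearMap.range M.mulVecLin

/-- The null space of a complex matrix: the kernel of `v ↦ M *ᵥ v`. -/
noncomputable def nullSpace {a b : ℕ} (M : Matrix (Fin a) (Fin b) ℂ) :
    Submodule ℂ (Fin b → ℂ) :=
  LinearMap.ker M.mulVecLin


lemma mulVec_ext' {a b : ℕ} {M N : Matrix (Fin a) (Fin b) ℂ}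
    (h : ∀ v, M *ᵥ v = N *ᵥ v) : M = N := by
  ext i j
  have := congrFun (h (Pi.single j 1)) i
  simpa [Matrix.mulVec_single] using this

lemma matIndex_spec {p : ℕ} (M : Matrix (Fin p) (Fin p) ℂ) :
    (M ^ matIndex M).rank = (M ^ (matIndex M + 1)).rank := by
  have hne : {j : ℕ | (M ^ j).rank = (M ^ (j + 1)).rank}.Nonempty := by
    by_contra h
    rw [Set.not_nonempty_iff_eq_empty] at h
    have h' : ∀ j : ℕ, (M ^ j).rank ≠ (M ^ (j + 1)).rank := by
      intro j hj
      exact absurd (h ▸ (Set.mem_setOf_eq ▸ hj :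
        j ∈ {j : ℕ | (M ^ j).rank = (M ^ (j + 1)).rank})) (Set.notMem_empty j)
    have hlt : ∀ j, (M ^ (j + 1)).rank < (M ^ j).rank := by
      intro j
      have hle : (M ^ (j + 1)).rank ≤ (M ^ j).rank := by
        rw [pow_succ]; exact Matrix.rank_mul_le_left _ _
      have := h' j; omega
    have key : ∀ j, (M ^ j).rank + j ≤ (M ^ 0).rank := by
      intro j; induction j with
      | zero => simp
      | succ i ih => have := hlt i; omega
    have := key ((M ^ 0).rank + 1); omega
  simpa [matIndex] using Nat.sInf_mem hne

lemma colSpace_mul_le {a b c : ℕ} (M : Matrix (Fin a) (Fin b) ℂ) (N : Matrix (Fin b) (Fin c) ℂ) :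
    colSpace (M * N) ≤ colSpace M := by
  unfold colSpace; rw [Matrix.mulVecLin_mul]; exact LinearMap.range_comp_le_range _ _

lemma nullSpace_le_mul_left {a b c : ℕ} (M : Matrix (Fin b) (Fin c) ℂ)
    (N : Matrix (Fin a) (Fin b) ℂ) : nullSpace M ≤ nullSpace (N * M) := by
  unfold nullSpace; rw [Matrix.mulVecLin_mul]; exact LinearMap.ker_le_ker_comp _ _

lemma nullSpace_eq_of_le {a b : ℕ} {M N : Matrix (Fin a) (Fin b) ℂ}
    (hle : nullSpace M ≤ nullSpace N) (hr : M.rank = N.rank) :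
    nullSpace M = nullSpace N := by
  apply Submodule.eq_of_le_of_finrank_eq hle
  have h1 := LinearMap.finrank_range_add_finrank_ker M.mulVecLin
  have h2 := LinearMap.finrank_range_add_finrank_ker N.mulVecLin
  have hr' : finrank ℂ (LinearMap.range M.mulVecLin) = finrank ℂ (LinearMap.range N.mulVecLin) := hr
  unfold nullSpace
  omega

lemma proj_eq {p : ℕ} {P Q : Matrix (Fin p) (Fin p) ℂ}
    (hP : P * P = P) (hQ : Q * Q = Q)
    (hr : colSpace P = colSpace Q) (hn : nullSpace P = nullSpace Q) : P = Q := by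
  apply mulVec_ext'
  intro v
  have hw : Q *ᵥ v ∈ colSpace P := by
    rw [hr]; exact ⟨v, Matrix.mulVecLin_apply ..⟩
  obtain ⟨u, hu⟩ := hw
  rw [Matrix.mulVecLin_apply] at hu
  have h1 : P *ᵥ (Q *ᵥ v) = Q *ᵥ v := by
    rw [← hu, Matrix.mulVec_mulVec, hP]
  have h2 : v - Q *ᵥ v ∈ nullSpace Q := by
    show Q.mulVecLin (v - Q *ᵥ v) = 0
    rw [map_sub]
    simp only [Matrix.mulVecLin_apply, Matrix.mulVec_mulVec, hQ, sub_self]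
  rw [← hn] at h2
  have h3 : P *ᵥ (v - Q *ᵥ v) = 0 := h2
  have h4 : P.mulVecLin v = P.mulVecLin (Q *ᵥ v) + P.mulVecLin (v - Q *ᵥ v) := by
    rw [← map_add]; congr 1; abel
  simp only [Matrix.mulVecLin_apply, h1, h3, add_zero] at h4
  exact h4

lemma semiconj_pow' {m n : ℕ} (B : Matrix (Fin m) (Fin n) ℂ) (W : Matrix (Fin n) (Fin m) ℂ) :
    ∀ j, W * (B * W) ^ j = (W * B) ^ j * W
  | 0 => by simp
  | j + 1 => by
    rw [pow_succ, ← Matrix.mul_assoc, semiconj_pow' B W j, pow_succ]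
    simp only [Matrix.mul_assoc]

/-- Core facts about `P = X*A` when `A^(k+1) X = A^k` with the rank conditions. -/
lemma key_facts {p : ℕ} (A X : Matrix (Fin p) (Fin p) ℂ) (k : ℕ)
    (hXA : A ^ (k + 1) * X = A ^ k)
    (hrk : X.rank = (A ^ k).rank)
    (hstab : (A ^ k).rank = (A ^ (k + 1)).rank) :
    X * A * X = X ∧ (X * A) * (X * A) = X * A ∧
      colSpace (X * A) = colSpace X ∧ nullSpace (X * A) = nullSpace (A ^ k) := by
  have hNX : nullSpace X = nullSpace (A ^ k) := by
    apply nullSpace_eq_of_le _ hrk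
    conv_rhs => rw [← hXA]
    exact nullSpace_le_mul_left _ _
  have hNk : nullSpace (A ^ k) = nullSpace (A ^ (k + 1)) := by
    apply nullSpace_eq_of_le _ hstab
    rw [pow_succ']
    exact nullSpace_le_mul_left _ _
  have hXAX : X * A * X = X := by
    have hz : A ^ k * (A * X - 1) = 0 := by
      rw [Matrix.mul_sub, Matrix.mul_one, ← Matrix.mul_assoc, ← pow_succ, hXA, sub_self]
    have hcol0 : X * (A * X - 1) = 0 := by
      apply mulVec_ext'
      intro v
      have hv : (A * X - 1) *ᵥ v ∈ nullSpace (A ^ k) := by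
        show (A ^ k).mulVecLin _ = 0
        rw [Matrix.mulVecLin_apply, Matrix.mulVec_mulVec, hz, Matrix.zero_mulVec]
      rw [← hNX] at hv
      have hv' : X *ᵥ ((A * X - 1) *ᵥ v) = 0 := hv
      rw [Matrix.mulVec_mulVec] at hv'
      rw [hv', Matrix.zero_mulVec]
    rw [Matrix.mul_sub, Matrix.mul_one, sub_eq_zero] at hcol0
    rw [Matrix.mul_assoc]
    exact hcol0
  have hPP : (X * A) * (X * A) = X * A := by
    rw [← Matrix.mul_assoc, hXAX]
  have hcolP : colSpace (X * A) = colSpace X := by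
    apply le_antisymm (colSpace_mul_le _ _)
    conv_lhs => rw [← hXAX]
    exact colSpace_mul_le _ _
  have hnullP : nullSpace (X * A) = nullSpace (A ^ k) := by
    ext v
    simp only [nullSpace, LinearMap.mem_ker, Matrix.mulVecLin_apply]
    constructor
    · intro h1
      have h2 : A *ᵥ v ∈ nullSpace X := by
        show X.mulVecLin (A *ᵥ v) = 0
        rw [Matrix.mulVecLin_apply, Matrix.mulVec_mulVec]; exact h1
      rw [hNX] at h2
      have h3 : (A ^ k) *ᵥ (A *ᵥ v) = 0 := h2
      rw [Matrix.mulVec_mulVec, ← pow_succ] at h3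
      have h4 : v ∈ nullSpace (A ^ (k + 1)) := h3
      rw [← hNk] at h4
      exact h4
    · intro h1
      have h4 : v ∈ nullSpace (A ^ (k + 1)) := by rw [← hNk]; exact h1
      have h3 : A ^ (k + 1) *ᵥ v = 0 := h4
      have h2 : A *ᵥ v ∈ nullSpace (A ^ k) := by
        show (A ^ k).mulVecLin (A *ᵥ v) = 0
        rw [Matrix.mulVecLin_apply, Matrix.mulVec_mulVec, ← pow_succ]
        exact h3
      rw [← hNX] at h2
      have h5 : X *ᵥ (A *ᵥ v) = 0 := h2
      rw [Matrix.mulVec_mulVec] at h5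
      exact h5
  exact ⟨hXAX, hPP, hcolP, hnullP⟩


/-- **Lemma 3.9.** `Y₁ = W·Z·W·B·H` is the unique matrix such that `Y₁·B` is the projector
`P_{col(WZ), N((WB)^k)}` and `col(Y₁ᴴ) ⊆ col(B)`. -/
theorem weighted_weak_DMP_unique_projector {m n : ℕ}
    (B : Matrix (Fin m) (Fin n) ℂ) (W : Matrix (Fin n) (Fin m) ℂ)
    (k : ℕ) (hk : k = matIndex (W * B))
    (H : Matrix (Fin n) (Fin m) ℂ)
    (hH1 : B * H * B = B) (hH2 : H * B * H = H)
    (hH3 : (B * H)ᴴ = B * H) (hH4 : (H * B)ᴴ = H * B)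
    (Z : Matrix (Fin m) (Fin n) ℂ)
    (hZ1 : W * (B * W) ^ (k + 1) * Z = (W * B) ^ k)
    (hZ2 : Z.rank = ((W * B) ^ k).rank) :
    ∀ Y₁ : Matrix (Fin n) (Fin m) ℂ,
      ((Y₁ * B) * (Y₁ * B) = Y₁ * B ∧
        colSpace (Y₁ * B) = colSpace (W * Z) ∧
        nullSpace (Y₁ * B) = nullSpace ((W * B) ^ k) ∧
        colSpace Y₁ᴴ ≤ colSpace B) ↔
      Y₁ = W * Z * W * B * H := by
  intro Y₁
  have hXA : (W * B) ^ (k + 1) * (W * Z) = (W * B) ^ k := by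
    rw [← Matrix.mul_assoc, ← semiconj_pow' B W (k + 1)]
    exact hZ1
  have hrk : (W * Z).rank = ((W * B) ^ k).rank := by
    apply le_antisymm
    · exact le_trans (Matrix.rank_mul_le_right _ _) (le_of_eq hZ2)
    · conv_lhs => rw [← hXA]
      exact Matrix.rank_mul_le_right _ _
  have hstab : ((W * B) ^ k).rank = ((W * B) ^ (k + 1)).rank := by
    rw [hk]; exact matIndex_spec (W * B)
  obtain ⟨hXAX, hPP, hcolP, hnullP⟩ := key_facts (W * B) (W * Z) k hXA hrk hstab
  have hYBcalc : (W * Z * W * B * H) * B = (W * Z) * (W * B) := by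
    simp only [Matrix.mul_assoc]
    rw [show B * (H * B) = B from by rw [← Matrix.mul_assoc]; exact hH1]
  constructor
  · rintro ⟨hidem, hcolY, hnullY, hcolYH⟩
    have hYB : Y₁ * B = (W * Z) * (W * B) := by
      apply proj_eq hidem hPP
      · rw [hcolY]; exact hcolP.symm
      · rw [hnullY]; exact hnullP.symm
    -- factor Y₁ᴴ through B
    have hTj : ∀ j, ∃ t, B *ᵥ t = Y₁ᴴ *ᵥ Pi.single j 1 := by
      intro j
      have hmem : Y₁ᴴ *ᵥ Pi.single j 1 ∈ colSpace B :=
        hcolYH ⟨Pi.single j 1, Matrix.mulVecLin_apply ..⟩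
      obtain ⟨t, ht⟩ := hmem
      exact ⟨t, by rw [← ht, Matrix.mulVecLin_apply]⟩
    choose t ht using hTj
    have hfact : Y₁ᴴ = B * Matrix.of (fun i j => t j i) := by
      ext i j
      have h6 := congrFun (ht j) i
      simp only [Matrix.mulVec_single, mul_one, MulOpposite.op_one, one_smul, Matrix.col_apply] at h6
      rw [Matrix.mul_apply, ← h6]
      simp [Matrix.mulVec, dotProduct]
    have hY1 : Y₁ = (Matrix.of (fun i j => t j i))ᴴ * Bᴴ := by
      have h7 := congrArg Matrix.conjTranspose hfact
      rw [Matrix.conjTranspose_conjTranspose, Matrix.conjTranspose_mul] at h7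
      exact h7
    have hBH : Bᴴ * (B * H) = Bᴴ := by
      have h8 := congrArg Matrix.conjTranspose hH1
      rw [Matrix.conjTranspose_mul, hH3] at h8
      exact h8
    have hYBH : Y₁ * (B * H) = Y₁ := by
      rw [hY1, Matrix.mul_assoc, hBH]
    rw [← hYBH, ← Matrix.mul_assoc, hYB]
    simp only [Matrix.mul_assoc]
  · intro hY
    subst hY
    refine ⟨?_, ?_, ?_, ?_⟩
    · rw [hYBcalc]; exact hPP
    · rw [hYBcalc]; exact hcolP
    · rw [hYBcalc]; exact hnullP
    · have h5 : (W * Z * W * B * H)ᴴ = B * (H * (W * Z * W)ᴴ) := by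
        rw [show W * Z * W * B * H = (W * Z * W) * (B * H) from by simp only [Matrix.mul_assoc],
          Matrix.conjTranspose_mul, hH3, Matrix.mul_assoc]
      rw [h5]
      exact colSpace_mul_le _ _
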